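/- For any linear isometry U on a Hilbert space H and any finite-dimensional subspace M ⊂ H, there exists a unitary operator V on H such that V x = U x for all x ∈ M. -/

import Mathlib

/-!
Let `N = M ⊔ U(M)`, a finite-dimensional subspace. Inside `N`, the isometry `U|_M : M → N` extends
to a linear isometry of `N`, which is onto because `N` is finite-dimensional. Acting by it on `N`
and by the identity on `Nᗮ` gives a surjective isometry of `H`, i.e. a unitary, agreeing with `U`
on `M`.
-/

open scoped ComplexOrder

noncomputable def rankOne {H : Type*} [NormedAddCommGroup H] [InnerProductSpace ℂ H]
    (x y : H) : H →L[ℂ] H :=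
  (ContinuousLinearMap.toSpanSingleton ℂ x).comp (innerSL ℂ y)

def IsRankOneProj {H : Type*} [NormedAddCommGroup H] [InnerProductSpace ℂ H]
    [CompleteSpace H] (P : H →L[ℂ] H) : Prop :=
  IsSelfAdjoint P ∧ P * P = P ∧ Module.rank ℂ (LinearMap.range (P : H →ₗ[ℂ] H)) = 1

section

variable {𝕜 E : Type*} [RCLike 𝕜] [NormedAddCommGroup E] [InnerProductSpace 𝕜 E]

namespace Submodule

noncomputable def extendByIdOrthogonal (K : Submodule 𝕜 E) [K.HasOrthogonalProjection]
    (e : K ≃ₗᵢ[𝕜] K) : E ≃ₗᵢ[𝕜] E :=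
  K.orthogonalDecomposition.trans <|
    (e.withLpProdCongr 2 (LinearIsometryEquiv.refl 𝕜 Kᗮ)).trans K.orthogonalDecomposition.symm

theorem extendByIdOrthogonal_apply_of_mem (K : Submodule 𝕜 E) [K.HasOrthogonalProjection]
    (e : K ≃ₗᵢ[𝕜] K) {x : E} (hx : x ∈ K) : K.extendByIdOrthogonal e x = e ⟨x, hx⟩ := by
  simp [extendByIdOrthogonal, orthogonalProjectionOnto_mem_subspace_eq_self ⟨x, hx⟩,
    orthogonalProjectionOnto_apply_of_mem_orthogonal (le_orthogonal_orthogonal K hx)]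

end Submodule

theorem LinearIsometry.exists_linearIsometryEquiv_extend {M : Submodule 𝕜 E}
    [FiniteDimensional 𝕜 M] (f : M →ₗᵢ[𝕜] E) : ∃ e : E ≃ₗᵢ[𝕜] E, ∀ x : M, e x = f x := by
  set N := M ⊔ LinearMap.range f.toLinearMap
  have hMN : M ≤ N := le_sup_left
  have hfN : ∀ x, f x ∈ N := fun x ↦ Submodule.mem_sup_right (LinearMap.mem_range_self _ x)
  let L : M.comap N.subtype →ₗᵢ[𝕜] N :=
    { toLinearMap := (f.toLinearMap.codRestrict N hfN).comp
        (Submodule.comapSubtypeEquivOfLe hMN).toLinearMap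
      norm_map' := fun x ↦ f.norm_map _ }
  let W : N ≃ₗᵢ[𝕜] N :=
    .ofSurjective L.extend (LinearMap.surjective_of_injective L.extend.injective)
  refine ⟨N.extendByIdOrthogonal W, fun x ↦ ?_⟩
  rw [N.extendByIdOrthogonal_apply_of_mem W (hMN x.2)]
  exact congrArg Subtype.val (L.extend_apply ⟨⟨x, hMN x.2⟩, x.2⟩)

end

theorem stmt13 {H : Type*} [NormedAddCommGroup H] [InnerProductSpace ℂ H] [CompleteSpace H]
    (U : H →L[ℂ] H) (hU : ∀ x, ‖U x‖ = ‖x‖)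
    (M : Submodule ℂ H) (hM : FiniteDimensional ℂ M) :
    ∃ V : H →L[ℂ] H, V ∈ unitary (H →L[ℂ] H) ∧ ∀ x ∈ M, V x = U x := by
  let U' : H →ₗᵢ[ℂ] H := { toLinearMap := U, norm_map' := hU }
  obtain ⟨e, he⟩ := (U'.comp M.subtypeₗᵢ).exists_linearIsometryEquiv_extend
  exact ⟨_, (Unitary.linearIsometryEquiv.symm e).2, fun x hx ↦ he ⟨x, hx⟩⟩
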